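/- Let H be a Hilbert space, {Xₙ} bounded operators on H with ∑ₙ XₙXₙ* ≤ a²I, and {uₙ} vectors with ∑ₙ ‖uₙ‖² ≤ b². Then the series ∑ₙ Xₙuₙ converges weakly in H and its weak sum w satisfies ‖w‖ ≤ a·b. -/
import Mathlib


open scoped ComplexInnerProductSpace

theorem stmt1 {H : Type*} [NormedAddCommGroup H] [InnerProductSpace ℂ H] [CompleteSpace H]
    (X : ℕ → (H →L[ℂ] H)) (u : ℕ → H) (a b : ℝ) (ha : 0 ≤ a) (hb : 0 ≤ b)
    (hX : ∀ v : H, ∀ F : Finset ℕ,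
      ∑ n ∈ F, ‖ContinuousLinearMap.adjoint (X n) v‖ ^ 2 ≤ a ^ 2 * ‖v‖ ^ 2)
    (hu : ∀ F : Finset ℕ, ∑ n ∈ F, ‖u n‖ ^ 2 ≤ b ^ 2) :
    ∃ w : H, ‖w‖ ≤ a * b ∧
      ∀ v : H, HasSum (fun n => ⟪v, X n (u n)⟫) ⟪v, w⟫ := by
  -- squares are summable
  have hX2 : ∀ v : H, Summable (fun n => ‖ContinuousLinearMap.adjoint (X n) v‖ ^ 2) :=
    fun v => summable_of_sum_le (fun n => sq_nonneg _) (hX v)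
  have hu2 : Summable (fun n => ‖u n‖ ^ 2) :=
    summable_of_sum_le (fun n => sq_nonneg _) hu
  -- the product sequence is summable
  have hprod : ∀ v : H,
      Summable (fun n => ‖u n‖ * ‖ContinuousLinearMap.adjoint (X n) v‖) := by
    intro v
    refine Summable.of_nonneg_of_le (fun n => by positivity)
      (fun n => ?_) (((hu2.add (hX2 v)).div_const 2))
    have := sq_nonneg (‖u n‖ - ‖ContinuousLinearMap.adjoint (X n) v‖)
    nlinarith
  -- finite Cauchy–Schwarz bound
  have hCS : ∀ v : H, ∀ F : Finset ℕ,
      ∑ n ∈ F, ‖u n‖ * ‖ContinuousLinearMap.adjoint (X n) v‖ ≤ a * b * ‖v‖ := by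
    intro v F
    have h1 := Finset.sum_mul_sq_le_sq_mul_sq F
      (fun n => ‖u n‖) (fun n => ‖ContinuousLinearMap.adjoint (X n) v‖)
    have h2 := hX v F
    have h3 := hu F
    have hs : 0 ≤ ∑ n ∈ F, ‖u n‖ * ‖ContinuousLinearMap.adjoint (X n) v‖ :=
      Finset.sum_nonneg fun n _ => by positivity
    have hsq : (∑ n ∈ F, ‖u n‖ * ‖ContinuousLinearMap.adjoint (X n) v‖) ^ 2
        ≤ (a * b * ‖v‖) ^ 2 := by
      calc (∑ n ∈ F, ‖u n‖ * ‖ContinuousLinearMap.adjoint (X n) v‖) ^ 2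
          ≤ (∑ n ∈ F, ‖u n‖ ^ 2) * ∑ n ∈ F, ‖ContinuousLinearMap.adjoint (X n) v‖ ^ 2 := by
            nlinarith [h1]
        _ ≤ b ^ 2 * (a ^ 2 * ‖v‖ ^ 2) := by
            apply mul_le_mul h3 h2 (Finset.sum_nonneg fun n _ => sq_nonneg _) (sq_nonneg b)
        _ = (a * b * ‖v‖) ^ 2 := by ring
    nlinarith [hsq, hs, mul_nonneg (mul_nonneg ha hb) (norm_nonneg v)]
  -- summability of the inner product series ⟪X n (u n), v⟫
  have hnorm : ∀ v : H, ∀ n : ℕ,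
      ‖(⟪X n (u n), v⟫ : ℂ)‖ ≤ ‖u n‖ * ‖ContinuousLinearMap.adjoint (X n) v‖ := by
    intro v n
    rw [← ContinuousLinearMap.adjoint_inner_right]
    exact norm_inner_le_norm _ _
  have hsum : ∀ v : H, Summable (fun n => (⟪X n (u n), v⟫ : ℂ)) := by
    intro v
    exact Summable.of_norm (Summable.of_nonneg_of_le (fun n => norm_nonneg _)
      (hnorm v) (hprod v))
  -- the continuous linear functional
  let ψlin : H →ₗ[ℂ] ℂ :=
    { toFun := fun v => ∑' n, (⟪X n (u n), v⟫ : ℂ)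
      map_add' := by
        intro v v'
        simp only [inner_add_right]
        exact Summable.tsum_add (hsum v) (hsum v')
      map_smul' := by
        intro c v
        simp only [inner_smul_right, RingHom.id_apply]
        exact tsum_mul_left }
  have hbound : ∀ v : H, ‖ψlin v‖ ≤ a * b * ‖v‖ := by
    intro v
    calc ‖∑' n, (⟪X n (u n), v⟫ : ℂ)‖ ≤ ∑' n, ‖(⟪X n (u n), v⟫ : ℂ)‖ :=
          norm_tsum_le_tsum_norm ((hsum v).norm)
      _ ≤ a * b * ‖v‖ := by
          refine Summable.tsum_le_of_sum_le (hsum v).norm fun F => ?_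
          calc ∑ n ∈ F, ‖(⟪X n (u n), v⟫ : ℂ)‖
              ≤ ∑ n ∈ F, ‖u n‖ * ‖ContinuousLinearMap.adjoint (X n) v‖ :=
                Finset.sum_le_sum fun n _ => hnorm v n
            _ ≤ a * b * ‖v‖ := hCS v F
  let ψ : H →L[ℂ] ℂ := LinearMap.mkContinuous ψlin (a * b) hbound
  let w : H := (InnerProductSpace.toDual ℂ H).symm ψ
  refine ⟨w, ?_, ?_⟩
  · have : ‖w‖ = ‖ψ‖ := ((InnerProductSpace.toDual ℂ H).symm.norm_map ψ)
    rw [this]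
    exact LinearMap.mkContinuous_norm_le ψlin (mul_nonneg ha hb) hbound
  · intro v
    have hwv : (⟪w, v⟫ : ℂ) = ∑' n, (⟪X n (u n), v⟫ : ℂ) :=
      InnerProductSpace.toDual_symm_apply
    have h1 : HasSum (fun n => (⟪X n (u n), v⟫ : ℂ)) ⟪w, v⟫ := by
      rw [hwv]; exact (hsum v).hasSum
    have h2 := h1.star
    have h3 : ∀ n, star (⟪X n (u n), v⟫ : ℂ) = ⟪v, X n (u n)⟫ := fun n => inner_conj_symm _ _
    have h4 : star (⟪w, v⟫ : ℂ) = ⟪v, w⟫ := inner_conj_symm v w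
    simpa only [Function.comp, h3, h4] using h2
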